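/- arXiv:2406.01200 — 3 statements merged into one kernel-verified Lean document; each statement's English description precedes it below -/
import Mathlib

section
/- For every integer $k \ge 0$ there exists $\rho > 0$ such that for all real $t$ with $|t| < \rho$, the random variable $(1-t)^{-Y}$ is integrable and $\frac{1}{k!}\big(E[(1-t)^{-Y}] - 1\big)^k = \sum_{n=0}^{\infty} L_Y(n,k) \frac{t^n}{n!}$, the series on the right converging absolutely. -/
open MeasureTheory ProbabilityTheory Finset

/-- The rising factorial `⟨x⟩_n = x (x+1) ⋯ (x+n-1)`, with `⟨x⟩_0 = 1`. -/
noncomputable def asc (x : ℝ) : ℕ → ℝ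
  | 0 => 1
  | n + 1 => asc x n * (x + n)

/-- The probabilistic Lah numbers associated with the random variable `Y`, defined from
the iid copies `Ys` of `Y` via `L_Y(n,k) = (1/k!) ∑_{l=0}^k C(k,l) (-1)^{k-l} E[⟨S_l⟩_n]`,
where `S_l = Y_1 + ⋯ + Y_l`. -/
noncomputable def probLah {Ω : Type*} [MeasurableSpace Ω] (μ : Measure Ω)
    (Ys : ℕ → Ω → ℝ) (n k : ℕ) : ℝ :=
  (k.factorial : ℝ)⁻¹ * ∑ l ∈ Finset.range (k + 1),
    (k.choose l : ℝ) * (-1) ^ (k - l) * ∫ ω, asc (∑ j ∈ Finset.range l, Ys j ω) n ∂μ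

/-- The probabilistic Lah-Bell polynomials `B_n^{(L,Y)}(x) = ∑_{k=0}^n L_Y(n,k) x^k`. -/
noncomputable def probLahBell {Ω : Type*} [MeasurableSpace Ω] (μ : Measure Ω)
    (Ys : ℕ → Ω → ℝ) (n : ℕ) (x : ℝ) : ℝ :=
  ∑ k ∈ Finset.range (n + 1), probLah μ Ys n k * x ^ k


/-!
The binomial series gives `∑ ⟨x⟩_n tⁿ / n! = (1 - t)^(-x)` for `|t| < 1`, and the same series at
`|x|, |t|` dominates it termwise, with sum `(1 - |t|)^(-|x|) = exp (s |x|)`, `s = -log (1 - |t|)`.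
For `|t| < 1 - e^(-r)` we have `s < r`, so by the moment generating function hypothesis and
independence `exp (s |S_l|)` is integrable; dominated convergence then integrates the series
termwise: `∑ E⟨S_l⟩_n tⁿ / n! = E[(1 - t)^(-S_l)] = E[(1 - t)^(-Y)]^l`. Taking the alternating
binomial combination over `l` gives `(E[(1 - t)^(-Y)] - 1)^k / k!`, and a convergent real series
converges absolutely.
-/

lemma asc_eq_eval_ascPochhammer (x : ℝ) (n : ℕ) : asc x n = (ascPochhammer ℝ n).eval x := by
  induction n with
  | zero => simp [asc]
  | succ n ih => rw [asc, ih, ascPochhammer_succ_eval]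

lemma continuous_asc (n : ℕ) : Continuous (fun x => asc x n) := by
  simp only [asc_eq_eval_ascPochhammer]
  exact Polynomial.continuous _

lemma asc_nonneg {x : ℝ} (hx : 0 ≤ x) (n : ℕ) : 0 ≤ asc x n := by
  induction n with
  | zero => simp [asc]
  | succ n ih => exact mul_nonneg ih (by positivity)

lemma abs_asc_le (x : ℝ) (n : ℕ) : |asc x n| ≤ asc |x| n := by
  induction n with
  | zero => simp [asc]
  | succ n ih =>
    rw [asc, asc, abs_mul]
    refine mul_le_mul ih ((abs_add_le x n).trans_eq ?_) (abs_nonneg _) (asc_nonneg (abs_nonneg x) n)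
    rw [Nat.abs_cast]

lemma asc_eq_factorial_mul_choose (x : ℝ) (n : ℕ) :
    asc x n = n.factorial * Ring.choose (x + n - 1) n := by
  rw [asc_eq_eval_ascPochhammer, ← Ring.multichoose_eq, ← Polynomial.ascPochhammer_smeval_eq_eval,
    ← Ring.factorial_nsmul_multichoose_eq_ascPochhammer, nsmul_eq_mul]

lemma hasSum_asc_mul_pow_div_factorial (x : ℝ) {t : ℝ} (ht : |t| < 1) :
    HasSum (fun n => asc x n * t ^ n / n.factorial) ((1 - t) ^ (-x)) := by
  have h := (Real.one_div_one_sub_rpow_hasFPowerSeriesOnBall_zero x).hasSum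
    (y := t) (by simpa [edist_dist, Real.dist_eq] using ht)
  simp only [FormalMultilinearSeries.ofScalars_apply_eq, zero_add, smul_eq_mul] at h
  rw [Real.rpow_neg (by linarith [le_abs_self t]), ← one_div]
  refine h.congr_fun fun n => ?_
  rw [asc_eq_factorial_mul_choose]
  field_simp

lemma one_sub_rpow_neg_le {t : ℝ} (ht : |t| < 1) (x : ℝ) :
    (1 - t) ^ (-x) ≤ (1 - |t|) ^ (-|x|) := by
  have hbound := (hasSum_asc_mul_pow_div_factorial x ht).norm_le_of_bounded
    (hasSum_asc_mul_pow_div_factorial |x| (t := |t|) (by rwa [abs_abs])) fun n => by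
      rw [Real.norm_eq_abs, abs_div, abs_mul, abs_pow, Nat.abs_cast]
      gcongr
      exact abs_asc_le x n
  exact (le_abs_self _).trans hbound

section Integral

open Real

variable {Ω : Type*} [MeasurableSpace Ω] {μ : Measure Ω}

lemma integrable_one_sub_rpow_neg {X : Ω → ℝ} (hX : AEMeasurable X μ) {t : ℝ} (ht : |t| < 1)
    (hint : Integrable (fun ω => (1 - |t|) ^ (-|X ω|)) μ) :
    Integrable (fun ω => (1 - t) ^ (-X ω)) μ := by
  refine hint.mono' (hX.neg.const_pow _).aestronglyMeasurable
    (Filter.Eventually.of_forall fun ω => ?_)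
  rw [norm_of_nonneg (rpow_nonneg (by linarith [le_abs_self t]) _)]
  exact one_sub_rpow_neg_le ht (X ω)

lemma hasSum_integral_asc_mul_pow_div_factorial {X : Ω → ℝ} (hX : AEMeasurable X μ) {t : ℝ}
    (ht : |t| < 1) (hint : Integrable (fun ω => (1 - |t|) ^ (-|X ω|)) μ) :
    HasSum (fun n => (∫ ω, asc (X ω) n ∂μ) * t ^ n / n.factorial)
      (∫ ω, (1 - t) ^ (-X ω) ∂μ) := by
  have habs : |(|t|)| < 1 := by rwa [abs_abs]
  have h := hasSum_integral_of_dominated_convergence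
    (F := fun n ω => asc (X ω) n * t ^ n / n.factorial)
    (fun n ω => asc |X ω| n * |t| ^ n / n.factorial)
    (fun n => ((((continuous_asc n).measurable.comp_aemeasurable hX).mul_const _).div_const _
      |>.aestronglyMeasurable))
    (fun n => Filter.Eventually.of_forall fun ω => by
      rw [norm_eq_abs, abs_div, abs_mul, abs_pow, Nat.abs_cast]
      gcongr
      exact abs_asc_le _ n)
    (Filter.Eventually.of_forall fun ω =>
      (hasSum_asc_mul_pow_div_factorial |X ω| habs).summable)
    (hint.congr (Filter.Eventually.of_forall fun ω =>
      ((hasSum_asc_mul_pow_div_factorial |X ω| habs).tsum_eq).symm))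
    (Filter.Eventually.of_forall fun ω => hasSum_asc_mul_pow_div_factorial (X ω) ht)
  simpa only [integral_div, integral_mul_const] using h

lemma integral_one_sub_rpow_neg_eq_mgf {X : Ω → ℝ} {t : ℝ} (ht : t < 1) :
    ∫ ω, (1 - t) ^ (-X ω) ∂μ = mgf X μ (-log (1 - t)) := by
  simp only [mgf, rpow_def_of_pos (sub_pos.mpr ht), neg_mul_comm]

lemma integrable_one_sub_rpow_neg_abs {X : Ω → ℝ} {u : ℝ} (hu : u < 1)
    (hpos : Integrable (fun ω => exp (-log (1 - u) * X ω)) μ)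
    (hneg : Integrable (fun ω => exp (log (1 - u) * X ω)) μ) :
    Integrable (fun ω => (1 - u) ^ (-|X ω|)) μ := by
  refine (integrable_exp_mul_abs hpos (by simpa using hneg)).congr
    (Filter.Eventually.of_forall fun ω => ?_)
  simp only [rpow_def_of_pos (sub_pos.mpr hu), neg_mul_comm]

variable {Y : Ω → ℝ} {Ys : ℕ → Ω → ℝ}

lemma mgf_sum_range_of_identDistrib (hYs : ∀ j, Measurable (Ys j))
    (hid : ∀ j, IdentDistrib (Ys j) Y μ μ) (hindep : iIndepFun Ys μ) (a : ℝ) (l : ℕ) :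
    mgf (fun ω => ∑ j ∈ range l, Ys j ω) μ a = mgf Y μ a ^ l := by
  have h := hindep.mgf_sum hYs (range l) (t := a)
  simp only [Finset.sum_fn] at h
  rw [h, Finset.prod_congr rfl fun j _ => mgf_congr_of_identDistrib _ _ (hid j) a,
    prod_const, card_range]

lemma integrable_exp_mul_sum_range_of_identDistrib [IsFiniteMeasure μ]
    (hYs : ∀ j, Measurable (Ys j)) (hid : ∀ j, IdentDistrib (Ys j) Y μ μ)
    (hindep : iIndepFun Ys μ) {a : ℝ} (h : Integrable (fun ω => exp (a * Y ω)) μ) (l : ℕ) :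
    Integrable (fun ω => exp (a * ∑ j ∈ range l, Ys j ω)) μ := by
  have hsum := hindep.integrable_exp_mul_sum hYs (s := range l) (t := a) fun j _ =>
    ((hid j).comp (measurable_const_mul a).exp).integrable_iff.mpr h
  simpa only [Finset.sum_apply] using hsum

lemma hasSum_probLah_mul_pow_div_factorial {t M : ℝ}
    (h : ∀ l, HasSum (fun n => (∫ ω, asc (∑ j ∈ range l, Ys j ω) n ∂μ) * t ^ n / n.factorial)
      (M ^ l))
    (k : ℕ) :
    HasSum (fun n => probLah μ Ys n k * t ^ n / n.factorial)
      ((k.factorial : ℝ)⁻¹ * (M - 1) ^ k) := by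
  have hcomb := (hasSum_sum fun l (_ : l ∈ range (k + 1)) =>
    (h l).mul_left ((k.choose l : ℝ) * (-1) ^ (k - l))).mul_left (k.factorial : ℝ)⁻¹
  have hval : (k.factorial : ℝ)⁻¹ * (M - 1) ^ k = (k.factorial : ℝ)⁻¹ *
      ∑ l ∈ range (k + 1), (k.choose l : ℝ) * (-1) ^ (k - l) * M ^ l := by
    rw [sub_eq_add_neg, add_pow]
    exact congrArg _ (sum_congr rfl fun l _ => by ring)
  rw [hval]
  refine hcomb.congr_fun fun n => ?_
  rw [probLah, mul_div_assoc, mul_assoc, sum_mul]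
  exact congrArg _ (sum_congr rfl fun l _ => by ring)

end Integral

theorem statement_0 {Ω : Type*} [MeasurableSpace Ω] (μ : Measure Ω) [IsProbabilityMeasure μ]
    (Y : Ω → ℝ) (Ys : ℕ → Ω → ℝ)
    (hY : Measurable Y) (hYs : ∀ j, Measurable (Ys j))
    (hid : ∀ j, IdentDistrib (Ys j) Y μ μ)
    (hindep : iIndepFun Ys μ)
    (r : ℝ) (hr : 0 < r)
    (hmgf : ∀ t : ℝ, |t| < r → Integrable (fun ω => Real.exp (t * Y ω)) μ)
    (k : ℕ) :
    ∃ ρ > 0, ∀ t : ℝ, |t| < ρ →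
      Integrable (fun ω => Real.rpow (1 - t) (-(Y ω))) μ ∧
      Summable (fun n : ℕ => |probLah μ Ys n k * t ^ n / n.factorial|) ∧
      (k.factorial : ℝ)⁻¹ * ((∫ ω, Real.rpow (1 - t) (-(Y ω)) ∂μ) - 1) ^ k
        = ∑' n : ℕ, probLah μ Ys n k * t ^ n / n.factorial := by
  refine ⟨1 - Real.exp (-r), by simpa using hr, fun t ht => ?_⟩
  have ht1 : |t| < 1 := ht.trans (by linarith [Real.exp_pos (-r)])
  have hlog : |Real.log (1 - |t|)| < r := by
    rw [abs_lt]
    constructor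
    · rw [Real.lt_log_iff_exp_lt (by linarith)]
      linarith
    · linarith [Real.log_nonpos (by linarith) (by linarith [abs_nonneg t] : 1 - |t| ≤ 1)]
  have hdom {X : Ω → ℝ} (hX : ∀ a, |a| < r → Integrable (fun ω => Real.exp (a * X ω)) μ) :
      Integrable (fun ω => (1 - |t|) ^ (-|X ω|)) μ :=
    integrable_one_sub_rpow_neg_abs (by linarith) (hX _ (by rwa [abs_neg])) (hX _ hlog)
  have hS (l : ℕ) :
      HasSum (fun n => (∫ ω, asc (∑ j ∈ range l, Ys j ω) n ∂μ) * t ^ n / n.factorial)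
        ((∫ ω, (1 - t) ^ (-Y ω) ∂μ) ^ l) := by
    have hint := hdom fun a ha =>
      integrable_exp_mul_sum_range_of_identDistrib hYs hid hindep (hmgf a ha) l
    convert hasSum_integral_asc_mul_pow_div_factorial (by fun_prop) ht1 hint using 1
    rw [integral_one_sub_rpow_neg_eq_mgf (by linarith [le_abs_self t]),
      integral_one_sub_rpow_neg_eq_mgf (by linarith [le_abs_self t]),
      mgf_sum_range_of_identDistrib hYs hid hindep]
  have hL := hasSum_probLah_mul_pow_div_factorial hS k
  exact ⟨integrable_one_sub_rpow_neg hY.aemeasurable ht1 (hdom hmgf),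
    summable_abs_iff.mpr hL.summable, hL.tsum_eq.symm⟩
end

section
/- For every integer $n \ge 0$ and every real number $x$, $B_n^{(L,Y)}(x) = \sum_{k=0}^{n} B_{n,k}\big(xE[\langle Y\rangle_1], xE[\langle Y\rangle_2], \dots, xE[\langle Y\rangle_{n-k+1}]\big)$. -/
open MeasureTheory ProbabilityTheory Finset

/-- The partial Bell polynomial `B_{n,k}(x_1, …, x_{n-k+1})`, as a sum over all tuples of
nonnegative integers `(k_1, …, k_{n-k+1})` with `∑ k_i = k` and `∑ i k_i = n`. -/
noncomputable def partialBell (n k : ℕ) (x : ℕ → ℝ) : ℝ :=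
  ∑ c ∈ (Fintype.piFinset fun _ : Fin (n - k + 1) => Finset.range (k + 1)) |>.filter
      (fun c => (∑ i, c i) = k ∧ (∑ i, (i.1 + 1) * c i) = n),
    ((n.factorial : ℝ) / ∏ i, ((c i).factorial : ℝ)) *
      ∏ i, (x (i.1 + 1) / ((i.1 + 1).factorial : ℝ)) ^ (c i)

/-!
The rising factorial satisfies the Vandermonde identity
`⟨a + b⟩_n = ∑ C(n, i) ⟨a⟩_i ⟨b⟩_{n-i}`, so for independent `Z, W` the exponential generating
function `F_Z(t) = ∑ E[⟨Z⟩_j] t^j / j!` satisfies `F_{Z+W} = F_Z F_W`, and hence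
`F_{S_l} = F_Y ^ l`. By the binomial theorem `L_Y(n,k) = (n!/k!) [t^n] (F_Y - 1)^k`, while the
multinomial theorem gives `B_{n,k}(m_1, m_2, …) = (n!/k!) [t^n] (∑_{j ≥ 1} m_j t^j / j!)^k`;
the factor `x^k` is the homogeneity of `B_{n,k}`. The finite moment generating function near `0`
makes all the moments `E[⟨S_l⟩_n]` finite.
-/

lemma asc_zero_succ (n : ℕ) : asc 0 (n + 1) = 0 := by
  induction n with
  | zero => simp [asc]
  | succ n ih => rw [asc, ih, zero_mul]

lemma asc_add (a b : ℝ) (n : ℕ) :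
    asc (a + b) n =
      ∑ ij ∈ antidiagonal n, (n.choose ij.1 : ℝ) * (asc a ij.1 * asc b ij.2) := by
  induction n with
  | zero => simp [asc]
  | succ n ih =>
    rw [sum_antidiagonal_choose_succ_mul (fun i j => asc a i * asc b j), asc, ih, sum_mul,
      ← sum_add_distrib]
    refine sum_congr rfl fun ij hij => ?_
    have hn : (n : ℝ) = ij.1 + ij.2 := by exact_mod_cast (mem_antidiagonal.mp hij).symm
    rw [Nat.choose_symm_of_eq_add (mem_antidiagonal.mp hij).symm, asc, asc, hn]
    ring

lemma measurable_asc (n : ℕ) : Measurable fun x => asc x n := by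
  simp only [asc_eq_eval_ascPochhammer]
  exact (ascPochhammer ℝ n).continuous.measurable

section RisingMoments

variable {Ω : Type*} [MeasurableSpace Ω] {μ : Measure Ω}

lemma integrable_asc_of_integrable_pow {Z : Ω → ℝ}
    (hZ : ∀ i : ℕ, Integrable (fun ω => Z ω ^ i) μ) (n : ℕ) :
    Integrable (fun ω => asc (Z ω) n) μ := by
  simp only [asc_eq_eval_ascPochhammer, Polynomial.eval_eq_sum_range]
  exact integrable_finsetSum _ fun i _ => (hZ i).const_mul _

noncomputable def risingMomentEGF (μ : Measure Ω) (Z : Ω → ℝ) : PowerSeries ℝ :=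
  PowerSeries.mk fun j => (∫ ω, asc (Z ω) j ∂μ) / (j.factorial : ℝ)

lemma coeff_risingMomentEGF (Z : Ω → ℝ) (n : ℕ) :
    PowerSeries.coeff n (risingMomentEGF μ Z) = (∫ ω, asc (Z ω) n ∂μ) / (n.factorial : ℝ) :=
  PowerSeries.coeff_mk _ _

lemma integral_asc_eq_factorial_mul_coeff (Z : Ω → ℝ) (n : ℕ) :
    ∫ ω, asc (Z ω) n ∂μ = n.factorial * PowerSeries.coeff n (risingMomentEGF μ Z) := by
  rw [coeff_risingMomentEGF, mul_div_cancel₀ _ (by positivity)]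

lemma risingMomentEGF_zero [IsProbabilityMeasure μ] : risingMomentEGF μ (fun _ => 0) = 1 := by
  ext (_ | n)
  · simp [coeff_risingMomentEGF, asc]
  · simp [coeff_risingMomentEGF, asc_zero_succ]

lemma risingMomentEGF_sub_one [IsProbabilityMeasure μ] (Z : Ω → ℝ) :
    risingMomentEGF μ Z - 1 = PowerSeries.mk fun j =>
      if j = 0 then 0 else (∫ ω, asc (Z ω) j ∂μ) / (j.factorial : ℝ) := by
  ext (_ | n) <;>
    simp only [map_sub, PowerSeries.coeff_one, PowerSeries.coeff_mk, coeff_risingMomentEGF] <;>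
    simp [asc]

lemma ProbabilityTheory.IdentDistrib.risingMomentEGF_eq {Z W : Ω → ℝ}
    (h : IdentDistrib Z W μ μ) : risingMomentEGF μ Z = risingMomentEGF μ W := by
  ext j
  rw [coeff_risingMomentEGF, coeff_risingMomentEGF]
  exact congrArg (· / _) (h.comp (measurable_asc j)).integral_eq

namespace ProbabilityTheory.IndepFun

variable {Z W : Ω → ℝ}

lemma integrable_asc_mul_asc (hZW : IndepFun Z W μ) {i j : ℕ}
    (hZ : Integrable (fun ω => asc (Z ω) i) μ) (hW : Integrable (fun ω => asc (W ω) j) μ) :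
    Integrable (fun ω => asc (Z ω) i * asc (W ω) j) μ :=
  (hZW.comp (measurable_asc i) (measurable_asc j)).integrable_mul hZ hW

lemma integrable_asc_add (hZW : IndepFun Z W μ)
    (hZ : ∀ j, Integrable (fun ω => asc (Z ω) j) μ)
    (hW : ∀ j, Integrable (fun ω => asc (W ω) j) μ) (n : ℕ) :
    Integrable (fun ω => asc (Z ω + W ω) n) μ := by
  simp only [asc_add]
  exact integrable_finsetSum _ fun ij _ =>
    (hZW.integrable_asc_mul_asc (hZ ij.1) (hW ij.2)).const_mul _

lemma risingMomentEGF_add (hZW : IndepFun Z W μ)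
    (hZ : ∀ j, Integrable (fun ω => asc (Z ω) j) μ)
    (hW : ∀ j, Integrable (fun ω => asc (W ω) j) μ) :
    risingMomentEGF μ (fun ω => Z ω + W ω) = risingMomentEGF μ Z * risingMomentEGF μ W := by
  ext n
  have hprod (i j : ℕ) : ∫ ω, asc (Z ω) i * asc (W ω) j ∂μ =
      (∫ ω, asc (Z ω) i ∂μ) * ∫ ω, asc (W ω) j ∂μ :=
    (hZW.comp (measurable_asc i) (measurable_asc j)).integral_mul_eq_mul_integral
      (hZ i).aestronglyMeasurable (hW j).aestronglyMeasurable
  simp only [coeff_risingMomentEGF, PowerSeries.coeff_mul, asc_add]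
  rw [integral_finsetSum _ fun ij _ =>
    (hZW.integrable_asc_mul_asc (hZ ij.1) (hW ij.2)).const_mul _, sum_div]
  refine sum_congr rfl fun ij hij => ?_
  obtain rfl := mem_antidiagonal.mp hij
  rw [integral_const_mul, hprod, Nat.cast_add_choose]
  field_simp

end ProbabilityTheory.IndepFun

namespace ProbabilityTheory.iIndepFun

variable {Y : Ω → ℝ} {Ys : ℕ → Ω → ℝ}

lemma indepFun_sum_range (hid : ∀ j, IdentDistrib (Ys j) Y μ μ) (hindep : iIndepFun Ys μ)
    (l : ℕ) : IndepFun (fun ω => ∑ i ∈ range l, Ys i ω) (Ys l) μ := by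
  simpa only [← Finset.sum_apply] using
    hindep.indepFun_sum_range_succ₀ (fun j => (hid j).aemeasurable_fst) l

lemma integrable_asc_sum_range [IsProbabilityMeasure μ] (hid : ∀ j, IdentDistrib (Ys j) Y μ μ)
    (hindep : iIndepFun Ys μ) (hY : ∀ j, Integrable (fun ω => asc (Y ω) j) μ) (l j : ℕ) :
    Integrable (fun ω => asc (∑ i ∈ range l, Ys i ω) j) μ := by
  induction l generalizing j with
  | zero => simp
  | succ l ih =>
    simp only [sum_range_succ]
    exact (hindep.indepFun_sum_range hid l).integrable_asc_add ih
      (fun j => ((hid l).comp (measurable_asc j)).integrable_iff.mpr (hY j)) j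

lemma risingMomentEGF_sum_range [IsProbabilityMeasure μ] (hid : ∀ j, IdentDistrib (Ys j) Y μ μ)
    (hindep : iIndepFun Ys μ) (hY : ∀ j, Integrable (fun ω => asc (Y ω) j) μ) (l : ℕ) :
    risingMomentEGF μ (fun ω => ∑ i ∈ range l, Ys i ω) = risingMomentEGF μ Y ^ l := by
  induction l with
  | zero => simpa using risingMomentEGF_zero
  | succ l ih =>
    simp only [sum_range_succ]
    rw [(hindep.indepFun_sum_range hid l).risingMomentEGF_add
      (hindep.integrable_asc_sum_range hid hY l)
      (fun j => ((hid l).comp (measurable_asc j)).integrable_iff.mpr (hY j)),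
      ih, (hid l).risingMomentEGF_eq, pow_succ]

end ProbabilityTheory.iIndepFun

end RisingMoments

lemma pow_add_dvd_pow_succ_sub_pow_succ {R : Type*} [CommRing R] {a x y : R} {d : ℕ}
    (hx : a ∣ x) (hy : a ∣ y) (hxy : a ^ d ∣ x - y) (k : ℕ) :
    a ^ (d + k) ∣ x ^ (k + 1) - y ^ (k + 1) := by
  induction k with
  | zero => simpa using hxy
  | succ k ih =>
    have h : x ^ (k + 2) - y ^ (k + 2) =
        x * (x ^ (k + 1) - y ^ (k + 1)) + (x - y) * y ^ (k + 1) := by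
      ring
    rw [h]
    refine dvd_add ?_ ?_
    · rw [← add_assoc, pow_succ']
      exact mul_dvd_mul hx ih
    · rw [pow_add]
      exact mul_dvd_mul hxy (pow_dvd_pow_of_dvd hy _)

namespace PowerSeries

variable {R : Type*} [CommRing R]

lemma coeff_sub_one_pow (F : PowerSeries R) (n k : ℕ) :
    coeff n ((F - 1) ^ k) =
      ∑ l ∈ range (k + 1), (k.choose l : R) * (-1) ^ (k - l) * coeff n (F ^ l) := by
  rw [sub_eq_add_neg, add_pow, map_sum]
  refine sum_congr rfl fun l _ => ?_
  rw [show ((-1 : PowerSeries R)) ^ (k - l) = C ((-1) ^ (k - l)) by simp,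
    ← map_natCast (C (R := R)), mul_assoc, ← map_mul, coeff_mul_C]
  ring

lemma coeff_pow_eq_of_X_pow_dvd_sub {f g : PowerSeries R} (hf : X ∣ f) (hg : X ∣ g) {n k : ℕ}
    (hfg : X ^ (n - k + 2) ∣ f - g) : coeff n (f ^ k) = coeff n (g ^ k) := by
  rcases k with _ | k
  · rfl
  · have h : X ^ (n + 1) ∣ f ^ (k + 1) - g ^ (k + 1) :=
      (pow_dvd_pow X (by omega)).trans (pow_add_dvd_pow_succ_sub_pow_succ hf hg hfg k)
    rw [← sub_eq_zero, ← map_sub]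
    exact X_pow_dvd_iff.mp h n (by omega)

lemma coeff_pow_sum_monomial {ι : Type*} [DecidableEq ι] (s : Finset ι) (e : ι → ℕ)
    (b : ι → R) (n k : ℕ) :
    coeff n ((∑ i ∈ s, monomial (e i) (b i)) ^ k) =
      ∑ c ∈ (s.piAntidiag k).filter (fun c => ∑ i ∈ s, e i * c i = n),
        (Nat.multinomial s c : R) * ∏ i ∈ s, b i ^ c i := by
  rw [sum_pow_eq_sum_piAntidiag, map_sum, sum_filter]
  refine sum_congr rfl fun c _ => ?_
  simp_rw [monomial_pow, prod_monomial, ← map_natCast (C (R := R)), coeff_C_mul, coeff_monomial,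
    mul_comm (c _)]
  split_ifs <;> simp_all [eq_comm]

end PowerSeries

open PowerSeries in
lemma factorial_mul_partialBell (n k : ℕ) (x : ℕ → ℝ) :
    (k.factorial : ℝ) * partialBell n k x =
      n.factorial * coeff n ((mk fun j => if j = 0 then 0 else x j / (j.factorial : ℝ)) ^ k) := by
  set a : ℕ → ℝ := fun j => x j / (j.factorial : ℝ)
  set G : PowerSeries ℝ := mk fun j => if j = 0 then 0 else a j
  set T : PowerSeries ℝ := ∑ i : Fin (n - k + 1), monomial (i.1 + 1) (a (i.1 + 1))
  have hG : X ∣ G := X_dvd_iff.mpr (by simp [G, ← coeff_zero_eq_constantCoeff_apply])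
  have hT : X ∣ T :=
    X_dvd_iff.mpr (by simp [T, ← coeff_zero_eq_constantCoeff_apply, coeff_monomial])
  -- `G` and its truncation `T` agree up to degree `n - k + 1`, which is all that `[X^n] G^k` sees
  have hGT : X ^ (n - k + 2) ∣ G - T := by
    refine X_pow_dvd_iff.mpr fun j hj => ?_
    have hT' : T = ∑ l ∈ Ico 1 (n - k + 1 + 1), monomial l (a l) := by
      rw [sum_Ico_eq_sum_range, Nat.add_sub_cancel,
        ← Fin.sum_univ_eq_sum_range (fun i => monomial (1 + i) (a (1 + i)))]
      simp only [T, add_comm 1]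
    rw [map_sub, hT', map_sum]
    simp only [G, coeff_mk, coeff_monomial, sum_ite_eq, mem_Ico]
    split_ifs <;> first | omega | simp
  have hsupp : (Fintype.piFinset fun _ : Fin (n - k + 1) => range (k + 1)).filter
        (fun c => (∑ i, c i) = k ∧ (∑ i, (i.1 + 1) * c i) = n) =
      (univ.piAntidiag k).filter (fun c => ∑ i, (i.1 + 1) * c i = n) := by
    ext c
    simp only [mem_filter, Fintype.mem_piFinset, mem_range, mem_piAntidiag, mem_univ,
      implies_true, and_true]
    refine ⟨fun h => h.2, fun h => ⟨fun i => ?_, h⟩⟩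
    exact Nat.lt_succ_of_le (h.1 ▸ single_le_sum (fun _ _ => Nat.zero_le _) (mem_univ i))
  rw [coeff_pow_eq_of_X_pow_dvd_sub hG hT hGT, coeff_pow_sum_monomial, partialBell, hsupp,
    mul_sum, mul_sum]
  refine sum_congr rfl fun c hc => ?_
  have hc : ∑ i, c i = k := (mem_piAntidiag.mp (mem_filter.mp hc).1).1
  have hmult : (∏ i, ((c i).factorial : ℝ)) * Nat.multinomial univ c = k.factorial := by
    exact_mod_cast hc ▸ Nat.multinomial_spec univ c
  have hfact : (∏ i, ((c i).factorial : ℝ)) ≠ 0 := by positivity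
  field_simp
  rw [← hmult]

lemma partialBell_const_mul (n k : ℕ) (a : ℝ) (x : ℕ → ℝ) :
    partialBell n k (fun j => a * x j) = a ^ k * partialBell n k x := by
  rw [partialBell, partialBell, mul_sum]
  refine sum_congr rfl fun c hc => ?_
  have hk : a ^ k = ∏ i, a ^ c i := by rw [prod_pow_eq_pow_sum, (mem_filter.mp hc).2.1]
  simp only [hk, mul_div_assoc, mul_pow, prod_mul_distrib]
  ring

theorem statement_5_general {Ω : Type*} [MeasurableSpace Ω] (μ : Measure Ω) [IsProbabilityMeasure μ]
    (Y : Ω → ℝ) (Ys : ℕ → Ω → ℝ)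
    (hid : ∀ j, IdentDistrib (Ys j) Y μ μ)
    (hindep : iIndepFun Ys μ)
    (r : ℝ) (hr : 0 < r)
    (hmgf : ∀ t : ℝ, |t| < r → Integrable (fun ω => Real.exp (t * Y ω)) μ)
    (n : ℕ) (x : ℝ) :
    probLahBell μ Ys n x =
      ∑ k ∈ Finset.range (n + 1), partialBell n k (fun j => x * ∫ ω, asc (Y ω) j ∂μ) := by
  have hY : ∀ j, Integrable (fun ω => asc (Y ω) j) μ :=
    integrable_asc_of_integrable_pow <| integrable_pow_of_integrable_exp_mul (half_pos hr).ne'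
      (hmgf _ (by rw [abs_of_pos (half_pos hr)]; linarith))
      (hmgf _ (by rw [abs_neg, abs_of_pos (half_pos hr)]; linarith))
  have hLah (k : ℕ) : probLah μ Ys n k = (k.factorial : ℝ)⁻¹ *
      (n.factorial * PowerSeries.coeff n ((risingMomentEGF μ Y - 1) ^ k)) := by
    simp only [probLah, PowerSeries.coeff_sub_one_pow, integral_asc_eq_factorial_mul_coeff,
      hindep.risingMomentEGF_sum_range hid hY, mul_sum]
    exact sum_congr rfl fun l _ => by ring
  have hBell (k : ℕ) : partialBell n k (fun j => ∫ ω, asc (Y ω) j ∂μ) = (k.factorial : ℝ)⁻¹ *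
      (n.factorial * PowerSeries.coeff n ((risingMomentEGF μ Y - 1) ^ k)) := by
    rw [risingMomentEGF_sub_one, ← factorial_mul_partialBell,
      inv_mul_cancel_left₀ (by positivity)]
  refine sum_congr rfl fun k _ => ?_
  rw [partialBell_const_mul, hLah, hBell, mul_comm]

theorem statement_5 {Ω : Type*} [MeasurableSpace Ω] (μ : Measure Ω) [IsProbabilityMeasure μ]
    (Y : Ω → ℝ) (Ys : ℕ → Ω → ℝ)
    (hY : Measurable Y) (hYs : ∀ j, Measurable (Ys j))
    (hid : ∀ j, IdentDistrib (Ys j) Y μ μ)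
    (hindep : iIndepFun Ys μ)
    (r : ℝ) (hr : 0 < r)
    (hmgf : ∀ t : ℝ, |t| < r → Integrable (fun ω => Real.exp (t * Y ω)) μ)
    (n : ℕ) (x : ℝ) :
    probLahBell μ Ys n x =
      ∑ k ∈ Finset.range (n + 1), partialBell n k (fun j => x * ∫ ω, asc (Y ω) j ∂μ) :=
  statement_5_general μ Y Ys hid hindep r hr hmgf n x
end

section
/- Let $Y$ be a Bernoulli random variable with probability of success $p$. Then for all integers $n \ge 1$ and $0 \le k \le n$, $L_Y(n,k) = p^k L(n,k)$. -/
open MeasureTheory ProbabilityTheory Finset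

/-- The unsigned Lah numbers: `L(n,k) = n!/k! · C(n-1,k-1)` for `1 ≤ k ≤ n`,
with `L(0,0) = 1` and `L(n,0) = 0` for `n ≥ 1`. -/
noncomputable def Lah (n k : ℕ) : ℝ :=
  if k = 0 then (if n = 0 then 1 else 0)
  else if k ≤ n then (n.factorial : ℝ) / (k.factorial : ℝ) * ((n - 1).choose (k - 1) : ℝ)
  else 0

/-- The Lah-Bell polynomial `B_n^L(x) = ∑_{k=0}^n L(n,k) x^k`. -/
noncomputable def LahBell (n : ℕ) (x : ℝ) : ℝ :=
  ∑ k ∈ Finset.range (n + 1), Lah n k * x ^ k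

/-!
The law of `S_l = Y_1 + ⋯ + Y_l` is the binomial law `Bin(l, p)`, because convolving with a
Bernoulli law is Pascal's rule; hence `E⟨S_l⟩_n = ∑_m C(l,m) p^m (1-p)^(l-m) ⟨m⟩_n`. Taking the
`k`-th finite difference in `l` of such a binomial mixture gives `p^k` times the `k`-th finite
difference of `m ↦ ⟨m⟩_n` (binomial theorem for `((1 - p) - 1)^(k-m) = (-p)^(k-m)`), and
`∑_m C(k,m) (-1)^(k-m) ⟨m⟩_n = k! L(n,k)` follows by writing `⟨m⟩_n = n! C(m+n-1, n)` and
expanding `C(m + (n-1), n)` by Vandermonde's identity.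
-/

open scoped Nat unitInterval
open unitInterval

theorem sum_choose_mul_choose_mul_pow_mul_pow {R : Type*} [CommRing R] (x y : R) (k m : ℕ) :
    ∑ l ∈ range (k + 1), (k.choose l : R) * l.choose m * x ^ (l - m) * y ^ (k - l)
      = k.choose m * (x + y) ^ (k - m) := by
  rcases lt_or_ge k m with hkm | hmk
  · rw [Nat.choose_eq_zero_of_lt hkm, Nat.cast_zero, zero_mul]
    refine sum_eq_zero fun l hl ↦ ?_
    rw [Nat.choose_eq_zero_of_lt (lt_of_le_of_lt (Nat.lt_succ_iff.1 (mem_range.1 hl)) hkm)]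
    simp
  rw [show k + 1 = m + (k - m + 1) by omega, sum_range_add,
    sum_eq_zero fun l hl ↦ by simp [Nat.choose_eq_zero_of_lt (mem_range.1 hl)], zero_add,
    add_pow, mul_sum]
  refine sum_congr rfl fun i hi ↦ ?_
  have hik : m + i ≤ k := by rw [mem_range] at hi; omega
  have hchoose : (k.choose (m + i) : R) * (m + i).choose m = k.choose m * (k - m).choose i := by
    rw [← Nat.cast_mul, ← Nat.cast_mul, Nat.choose_mul (Nat.le_add_right m i),
      Nat.add_sub_cancel_left]
  rw [Nat.add_sub_cancel_left, show k - (m + i) = k - m - i by omega]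
  linear_combination (x ^ i * y ^ (k - m - i)) * hchoose

theorem sum_choose_mul_neg_one_pow_mul_binomial_mixture {R : Type*} [CommRing R]
    (g : ℕ → R) (p : R) (k : ℕ) :
    ∑ l ∈ range (k + 1), (k.choose l : R) * (-1) ^ (k - l) *
        ∑ m ∈ range (l + 1), l.choose m * p ^ m * (1 - p) ^ (l - m) * g m
      = p ^ k * ∑ m ∈ range (k + 1), (k.choose m : R) * (-1) ^ (k - m) * g m := by
  have hextend (l : ℕ) (hl : l ∈ range (k + 1)) :
      ∑ m ∈ range (l + 1), (l.choose m : R) * p ^ m * (1 - p) ^ (l - m) * g m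
        = ∑ m ∈ range (k + 1), (l.choose m : R) * p ^ m * (1 - p) ^ (l - m) * g m :=
    sum_subset (range_subset_range.2 (mem_range.1 hl)) fun m _ hm ↦ by
      simp [Nat.choose_eq_zero_of_lt (not_lt.1 (mt mem_range.2 hm))]
  simp_rw +contextual [hextend, mul_sum]
  rw [sum_comm]
  refine sum_congr rfl fun m hm ↦ ?_
  have hmk : m ≤ k := Nat.lt_succ_iff.1 (mem_range.1 hm)
  calc ∑ l ∈ range (k + 1), (k.choose l : R) * (-1) ^ (k - l) *
          (l.choose m * p ^ m * (1 - p) ^ (l - m) * g m)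
      = p ^ m * g m * ∑ l ∈ range (k + 1), (k.choose l : R) * l.choose m * (1 - p) ^ (l - m) *
          (-1) ^ (k - l) := by
        rw [mul_sum]; exact sum_congr rfl fun _ _ ↦ by ring
    _ = p ^ k * (k.choose m * (-1) ^ (k - m) * g m) := by
        obtain ⟨j, rfl⟩ := Nat.exists_eq_add_of_le hmk
        rw [sum_choose_mul_choose_mul_pow_mul_pow, Nat.add_sub_cancel_left]
        ring

theorem asc_natCast (m n : ℕ) : asc m n = n ! * (m + n - 1).choose n := by
  have hasc : asc m n = m.ascFactorial n := by
    induction n with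
    | zero => simp [asc]
    | succ n ih => rw [asc, ih, Nat.ascFactorial_succ]; push_cast; ring
  rw [hasc, Nat.ascFactorial_eq_factorial_mul_choose']
  push_cast
  ring

theorem factorial_mul_Lah {n : ℕ} (hn : 1 ≤ n) (k : ℕ) :
    (k ! : ℝ) * Lah n k = if k ≤ n then (n ! : ℝ) * (n - 1).choose (n - k) else 0 := by
  rcases Nat.eq_zero_or_pos k with rfl | hk
  · simp [Lah, Nat.choose_eq_zero_of_lt (Nat.sub_lt hn one_pos), Nat.one_le_iff_ne_zero.1 hn]
  split_ifs with hkn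
  · rw [Lah, if_neg hk.ne', if_pos hkn,
      Nat.choose_symm_of_eq_add (show n - 1 = (k - 1) + (n - k) by omega)]
    field_simp
  · simp [Lah, hk.ne', hkn]

theorem sum_choose_mul_neg_one_pow_mul_asc {n : ℕ} (hn : 1 ≤ n) (k : ℕ) :
    ∑ m ∈ range (k + 1), (k.choose m : ℝ) * (-1) ^ (k - m) * asc m n = k ! * Lah n k := by
  have hvandermonde (m : ℕ) :
      asc m n = ∑ j ∈ range (n + 1), (n ! * (n - 1).choose (n - j) : ℝ) * m.choose j := by
    rw [asc_natCast, show m + n - 1 = m + (n - 1) by omega, Nat.add_choose_eq,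
      Nat.sum_antidiagonal_eq_sum_range_succ (fun a b ↦ m.choose a * (n - 1).choose b)]
    push_cast
    rw [mul_sum]
    exact sum_congr rfl fun _ _ ↦ by ring
  have hdiff (j : ℕ) :
      ∑ m ∈ range (k + 1), (k.choose m : ℝ) * (-1) ^ (k - m) * m.choose j
        = if j = k then 1 else 0 := by
    have h := sum_choose_mul_choose_mul_pow_mul_pow (1 : ℝ) (-1) k j
    simp only [one_pow, mul_one, add_neg_cancel] at h
    calc _ = ∑ m ∈ range (k + 1), (k.choose m : ℝ) * m.choose j * (-1) ^ (k - m) :=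
          sum_congr rfl fun _ _ ↦ by ring
      _ = k.choose j * 0 ^ (k - j) := h
      _ = if j = k then 1 else 0 := by
        rcases lt_trichotomy j k with hjk | rfl | hkj
        · simp [hjk.ne, Nat.sub_ne_zero_of_lt hjk]
        · simp
        · simp [hkj.ne', Nat.choose_eq_zero_of_lt hkj]
  calc ∑ m ∈ range (k + 1), (k.choose m : ℝ) * (-1) ^ (k - m) * asc m n
      = ∑ j ∈ range (n + 1), (n ! * (n - 1).choose (n - j) : ℝ) *
          ∑ m ∈ range (k + 1), (k.choose m : ℝ) * (-1) ^ (k - m) * m.choose j := by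
        simp_rw [hvandermonde, mul_sum]
        rw [sum_comm]
        exact sum_congr rfl fun _ _ ↦ sum_congr rfl fun _ _ ↦ by ring
    _ = k ! * Lah n k := by
        simp_rw [hdiff, factorial_mul_Lah hn, mul_ite, mul_one, mul_zero, sum_ite_eq', mem_range,
          Nat.lt_succ_iff]

theorem MeasureTheory.Measure.map_conv_map {M N : Type*} [AddMonoid M] [AddMonoid N]
    [MeasurableSpace M] [MeasurableSpace N] [MeasurableAdd₂ M] [MeasurableAdd₂ N]
    (f : M →+ N) (hf : Measurable f) (μ ν : Measure M) [SFinite μ] [SFinite ν] :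
    (μ ∗ ν).map f = μ.map f ∗ ν.map f := by
  rw [Measure.conv, Measure.conv, map_map hf measurable_add, Measure.map_prod_map _ _ hf hf,
    map_map measurable_add (hf.prodMap hf)]
  congr 1
  funext x
  simp

theorem ProbabilityTheory.binomial_succ (n : ℕ) (p : I) :
    Bin(n + 1, p) = Bin(n, p) ∗ Ber(1, 0, p) := by
  have hconv : Bin(n, p) ∗ Ber(1, 0, p)
      = toNNReal p • Bin(n, p).map (· + 1) + toNNReal (σ p) • Bin(n, p) := by
    simp only [bernoulliMeasure_def, ENNReal.smul_def]
    rw [Measure.conv_add, Measure.conv_smul_right, Measure.conv_smul_right,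
      Measure.conv_dirac, Measure.conv_dirac_zero]
  rw [ext_iff_measureReal_singleton, hconv]
  intro k
  rw [measureReal_add_apply, measureReal_nnreal_smul_apply, measureReal_nnreal_smul_apply,
    map_measureReal_apply (by fun_prop) (measurableSet_singleton _)]
  rcases k with _ | k
  · have hempty : (· + 1) ⁻¹' {0} = (∅ : Set ℕ) := by ext; simp
    simp only [hempty, measureReal_empty, binomial_real_zero, coe_toNNReal, coe_symm_eq]
    ring
  · have hpred : (· + 1) ⁻¹' {k + 1} = ({k} : Set ℕ) := by ext; simp
    simp only [hpred, binomial_real_singleton, Nat.choose_succ_succ', coe_toNNReal, coe_symm_eq,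
      Nat.cast_add, Nat.add_sub_add_right]
    rcases lt_or_ge k n with hkn | hnk
    · rw [show n - k = n - (k + 1) + 1 by omega]
      ring
    · rw [Nat.choose_eq_zero_of_lt (by omega : n < k + 1)]
      ring

section IndepBernoulli

variable {Ω : Type*} [MeasurableSpace Ω] {μ : Measure Ω} [IsProbabilityMeasure μ]

theorem map_eq_bernoulliMeasure {Z : Ω → ℝ} (hZ : AEMeasurable Z μ) (p : I)
    (h1 : μ (Z ⁻¹' {1}) = ENNReal.ofReal p) (h0 : μ (Z ⁻¹' {0}) = ENNReal.ofReal (1 - p)) :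
    μ.map Z = Ber(1, 0, p) := by
  have h1' : μ.map Z {1} = ENNReal.ofReal p := by
    rw [Measure.map_apply_of_aemeasurable hZ (measurableSet_singleton _), h1]
  have h0' : μ.map Z {0} = ENNReal.ofReal (1 - p) := by
    rw [Measure.map_apply_of_aemeasurable hZ (measurableSet_singleton _), h0]
  have : IsProbabilityMeasure (μ.map Z) := Measure.isProbabilityMeasure_map hZ
  have hsupport : ∀ᵐ x ∂μ.map Z, x ∈ ({1} ∪ {0} : Set ℝ) := by
    rw [ae_iff, ← Set.compl_def,
      prob_compl_eq_zero_iff ((measurableSet_singleton 1).union (measurableSet_singleton 0)),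
      measure_union (by simp) (measurableSet_singleton _), h1', h0',
      ← ENNReal.ofReal_add p.2.1 (sub_nonneg.2 p.2.2), add_sub_cancel, ENNReal.ofReal_one]
  rw [← Measure.restrict_eq_self_of_ae_mem hsupport,
    Measure.restrict_union (by simp) (measurableSet_singleton _), Measure.restrict_singleton,
    Measure.restrict_singleton, h1', h0', bernoulliMeasure_def]
  simp only [ENNReal.smul_def]
  congr 3
  · exact ENNReal.ofReal_coe_nnreal (p := toNNReal p)
  · rw [← coe_symm_eq]
    exact ENNReal.ofReal_coe_nnreal (p := toNNReal (σ p))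

variable {X : ℕ → Ω → ℝ} {p : I}

theorem map_sum_range_eq_binomial (hX : ∀ j, Measurable (X j)) (hindep : iIndepFun X μ)
    (hlaw : ∀ j, μ.map (X j) = Ber(1, 0, p)) (l : ℕ) :
    μ.map (fun ω ↦ ∑ j ∈ range l, X j ω) = Bin(ℝ, l, p) := by
  induction l with
  | zero => simp
  | succ l ih =>
    have hsum : Measurable fun ω ↦ ∑ j ∈ range l, X j ω := by fun_prop
    have hind : IndepFun (fun ω ↦ ∑ j ∈ range l, X j ω) (X l) μ := by
      simpa [Finset.sum_fn] using
        hindep.indepFun_finsetSum_of_notMem hX (s := range l) (i := l) (by simp)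
    have hsplit :
        (fun ω ↦ ∑ j ∈ range (l + 1), X j ω) = (fun ω ↦ ∑ j ∈ range l, X j ω) + X l := by
      ext ω
      simp [sum_range_succ]
    rw [hsplit, hind.map_add_eq_map_conv_map hsum (hX l), ih, hlaw l, binomial_succ,
      ← Nat.coe_castAddMonoidHom, Measure.map_conv_map _ (measurable_of_countable _),
      map_bernoulliMeasure]
    simp

theorem integral_comp_sum_range_eq_sum_binomial (hX : ∀ j, Measurable (X j))
    (hindep : iIndepFun X μ) (hlaw : ∀ j, μ.map (X j) = Ber(1, 0, p)) (f : ℝ → ℝ) (l : ℕ) :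
    ∫ ω, f (∑ j ∈ range l, X j ω) ∂μ
      = ∑ m ∈ range (l + 1), l.choose m * (p : ℝ) ^ m * (1 - p) ^ (l - m) * f m := by
  have hmap := map_sum_range_eq_binomial hX hindep hlaw l
  rw [← integral_map (by fun_prop) (hmap ▸ (integrable_map_cast_binomial f).aestronglyMeasurable),
    hmap, integral_map_cast_binomial, Nat.range_succ_eq_Iic]
  simp only [smul_eq_mul]

end IndepBernoulli

theorem statement_14_general {Ω : Type*} [MeasurableSpace Ω] (μ : Measure Ω) [IsProbabilityMeasure μ]
    (Y : Ω → ℝ) (Ys : ℕ → Ω → ℝ)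
    (hY : Measurable Y) (hYs : ∀ j, Measurable (Ys j))
    (hid : ∀ j, IdentDistrib (Ys j) Y μ μ)
    (hindep : iIndepFun Ys μ)
    (p : ℝ) (hp0 : 0 ≤ p) (hp1 : p ≤ 1)
    (hber1 : μ {ω | Y ω = 1} = ENNReal.ofReal p)
    (hber0 : μ {ω | Y ω = 0} = ENNReal.ofReal (1 - p))
    (n k : ℕ) (hn : 1 ≤ n) :
    probLah μ Ys n k = p ^ k * Lah n k := by
  set q : I := ⟨p, hp0, hp1⟩
  have hlaw (j : ℕ) : μ.map (Ys j) = Ber(1, 0, q) :=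
    (hid j).map_eq.trans (map_eq_bernoulliMeasure hY.aemeasurable q hber1 hber0)
  rw [probLah]
  simp_rw [integral_comp_sum_range_eq_sum_binomial hYs hindep hlaw (fun x ↦ asc x n)]
  rw [sum_choose_mul_neg_one_pow_mul_binomial_mixture, sum_choose_mul_neg_one_pow_mul_asc hn,
    mul_left_comm, inv_mul_cancel_left₀ (by positivity)]

theorem statement_14 {Ω : Type*} [MeasurableSpace Ω] (μ : Measure Ω) [IsProbabilityMeasure μ]
    (Y : Ω → ℝ) (Ys : ℕ → Ω → ℝ)
    (hY : Measurable Y) (hYs : ∀ j, Measurable (Ys j))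
    (hid : ∀ j, IdentDistrib (Ys j) Y μ μ)
    (hindep : iIndepFun Ys μ)
    (p : ℝ) (hp0 : 0 ≤ p) (hp1 : p ≤ 1)
    (hber1 : μ {ω | Y ω = 1} = ENNReal.ofReal p)
    (hber0 : μ {ω | Y ω = 0} = ENNReal.ofReal (1 - p))
    (n k : ℕ) (hn : 1 ≤ n) (hkn : k ≤ n) :
    probLah μ Ys n k = p ^ k * Lah n k :=
  statement_14_general μ Y Ys hY hYs hid hindep p hp0 hp1 hber1 hber0 n k hn
end
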